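/- Suppose χζ ≤ ln 2, β ∈ [0, 1], P_T > 0, and g₂(P_T) > 1 − β. Then f₂(P) = ln(log₂(1 + ζP)) − (1 − β)·ln(P + P_f + χ·log₂(1 + ζP)) is strictly increasing on (0, P_T], so the maximum of f₂ over (0, P_T] is attained uniquely at P = P_T. -/

import Mathlib

/-!
Put `u = 1 + ζP`, `c = χζ / ln 2 ∈ [0, 1]` and `q = ζ P_f`. Then
`g₂(P) = (u - 1 + q + c ln u) / ((u + c) ln u)` and
`f₂'(P) = (u + c) / (u M) · (g₂(P) - (1 - β))` with `M = P + P_f + χ log₂ u > 0`.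
The sign of `d g₂ / du` reduces, through `0 ≤ ln u ≤ u - 1`, to a polynomial inequality in `u`
and `ln u`, so `g₂` is antitone; hence `g₂ > 1 - β` on all of `(0, P_T]`, where `f₂' > 0`.
-/

open Real Set

lemma sq_add_mul_log_le {u c q : ℝ} (hu : 1 ≤ u) (hc₀ : 0 ≤ c) (hc₁ : c ≤ 1) (hq : 0 ≤ q) :
    (u + c) ^ 2 * log u ≤ (u - 1 + q + c * log u) * (u * log u + u + c) := by
  have hL₀ : 0 ≤ log u := log_nonneg hu
  have hL₁ : log u ≤ u - 1 := log_le_sub_one_of_pos (by linarith)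
  -- for `u ≤ 2`, `(log u - 1)² ≥ (2 - u)²` turns the left side into `(u - 1)³`
  have hψ : 0 ≤ u * (log u - 1) ^ 2 + u ^ 2 - u - 1 := by
    rcases le_total u 2 with hu₂ | hu₂
    · have hsq : (2 - u) ^ 2 ≤ (log u - 1) ^ 2 := by nlinarith
      nlinarith [mul_le_mul_of_nonneg_left hsq (by linarith : 0 ≤ u),
        pow_nonneg (by linarith : 0 ≤ u - 1) 3]
    · nlinarith [mul_nonneg (by linarith : 0 ≤ u) (sq_nonneg (log u - 1))]
  have h₁ : 0 ≤ (1 - c) * (u * (u - 1 - log u)) :=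
    mul_nonneg (by linarith) (mul_nonneg (by linarith) (by linarith))
  have h₂ : 0 ≤ c * (u * (log u - 1) ^ 2 + u ^ 2 - u - 1) := mul_nonneg hc₀ hψ
  have h₃ : 0 ≤ q * (u * log u + u + c) := by
    have := mul_nonneg (by linarith : 0 ≤ u) hL₀
    exact mul_nonneg hq (by linarith)
  linear_combination h₁ + h₂ + h₃

noncomputable def powerRatio (c q u : ℝ) : ℝ := (u - 1 + q + c * log u) / ((u + c) * log u)

lemma hasDerivAt_powerRatio {c q u : ℝ} (hc : 0 ≤ c) (hu : 1 < u) :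
    HasDerivAt (powerRatio c q)
      (((u + c) ^ 2 * log u - (u - 1 + q + c * log u) * (u * log u + u + c)) /
        (u * ((u + c) * log u) ^ 2)) u := by
  have hu₀ : 0 < u := by linarith
  have hL : 0 < log u := log_pos hu
  have hlog := hasDerivAt_log hu₀.ne'
  have hnum : HasDerivAt (fun x => x - 1 + q + c * log x) (1 + c * u⁻¹) u :=
    (((hasDerivAt_id' u).sub_const 1).add_const q).add (hlog.const_mul c)
  have hden : HasDerivAt (fun x => (x + c) * log x) (log u + (u + c) * u⁻¹) u := by
    simpa using ((hasDerivAt_id' u).add_const c).fun_mul hlog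
  refine (hnum.fun_div hden (mul_pos (by linarith) hL).ne').congr_deriv ?_
  field_simp
  ring

lemma antitoneOn_powerRatio {c q : ℝ} (hc₀ : 0 ≤ c) (hc₁ : c ≤ 1) (hq : 0 ≤ q) :
    AntitoneOn (powerRatio c q) (Ioi 1) := by
  refine antitoneOn_of_hasDerivWithinAt_nonpos (convex_Ioi 1)
    (fun u hu => (hasDerivAt_powerRatio hc₀ hu).continuousAt.continuousWithinAt)
    (fun u hu => (hasDerivAt_powerRatio hc₀ (interior_subset hu)).hasDerivWithinAt) ?_
  rw [interior_Ioi]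
  rintro u (hu : 1 < u)
  exact div_nonpos_of_nonpos_of_nonneg (sub_nonpos.2 (sq_add_mul_log_le hu.le hc₀ hc₁ hq))
    (mul_nonneg (by linarith) (sq_nonneg _))

noncomputable def logUtility (ζ Pf χ w P : ℝ) : ℝ :=
  log (logb 2 (1 + ζ * P)) - w * log (P + Pf + χ * logb 2 (1 + ζ * P))

lemma hasDerivAt_logUtility {ζ Pf χ w P : ℝ} (hζ : 0 < ζ) (hPf : 0 ≤ Pf) (hχ : 0 ≤ χ)
    (hP : 0 < P) :
    HasDerivAt (logUtility ζ Pf χ w)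
      ((1 + ζ * P + χ * ζ / log 2) / ((1 + ζ * P) * (P + Pf + χ * logb 2 (1 + ζ * P))) *
        (powerRatio (χ * ζ / log 2) (ζ * Pf) (1 + ζ * P) - w)) P := by
  have hu : 1 < 1 + ζ * P := by nlinarith
  have hL : 0 < log (1 + ζ * P) := log_pos hu
  have hlog2 : 0 < log 2 := log_pos one_lt_two
  have hM : 0 < P + Pf + χ * logb 2 (1 + ζ * P) := by
    have := logb_pos one_lt_two hu
    positivity
  have hlogb : HasDerivAt (fun x => logb 2 (1 + ζ * x)) (ζ / (1 + ζ * P) / log 2) P := by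
    simpa [logb] using
      ((((hasDerivAt_id' P).const_mul ζ).const_add 1).log (by linarith)).div_const (log 2)
  have h₁ := hlogb.log (logb_pos one_lt_two hu).ne'
  have h₂ := (((hasDerivAt_id' P).add_const Pf).fun_add (hlogb.const_mul χ)).log hM.ne'
  refine (h₁.fun_sub (h₂.const_mul w)).congr_deriv ?_
  rw [powerRatio, logb]
  field_simp
  ring

lemma strictMonoOn_logUtility {ζ Pf χ w PT : ℝ} (hζ : 0 < ζ) (hPf : 0 ≤ Pf) (hχ : 0 ≤ χ)
    (hmild : χ * ζ ≤ log 2) (hw : w < powerRatio (χ * ζ / log 2) (ζ * Pf) (1 + ζ * PT)) :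
    StrictMonoOn (logUtility ζ Pf χ w) (Ioc 0 PT) := by
  have hlog2 : 0 < log 2 := log_pos one_lt_two
  have hanti := antitoneOn_powerRatio (by positivity) ((div_le_one hlog2).2 hmild)
    (mul_nonneg hζ.le hPf)
  refine strictMonoOn_of_hasDerivWithinAt_pos (convex_Ioc 0 PT)
    (fun P hP => (hasDerivAt_logUtility hζ hPf hχ hP.1).continuousAt.continuousWithinAt)
    (fun P hP => (hasDerivAt_logUtility hζ hPf hχ (interior_subset hP).1).hasDerivWithinAt) ?_
  rw [interior_Ioc]
  rintro P ⟨hP, hPT⟩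
  have hu : 1 < 1 + ζ * P := by nlinarith
  have hlogb := logb_pos one_lt_two hu
  have hratio : w < powerRatio (χ * ζ / log 2) (ζ * Pf) (1 + ζ * P) :=
    hw.trans_le (hanti (mem_Ioi.2 hu) (mem_Ioi.2 (by nlinarith)) (by nlinarith))
  exact mul_pos (by positivity) (sub_pos.2 hratio)

theorem optimal_power_case1_general
    (ζ Pf χ β PT : ℝ) (hζ : 0 < ζ) (hPf : 0 < Pf) (hχ : 0 ≤ χ)
    (hmild : χ * ζ ≤ Real.log 2)
    (g₂ f₂ : ℝ → ℝ)
    (hg₂ : ∀ P : ℝ, g₂ P =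
      ζ * (P + Pf + χ / Real.log 2 * Real.log (1 + ζ * P)) /
        ((1 + ζ * P + χ * ζ / Real.log 2) * Real.log (1 + ζ * P)))
    (hf₂ : ∀ P : ℝ, f₂ P =
      Real.log (Real.logb 2 (1 + ζ * P)) -
        (1 - β) * Real.log (P + Pf + χ * Real.logb 2 (1 + ζ * P)))
    (hgPT : 1 - β < g₂ PT) :
    StrictMonoOn f₂ (Set.Ioc 0 PT) ∧
      ∀ P ∈ Set.Ioc (0 : ℝ) PT, P ≠ PT → f₂ P < f₂ PT := by
  have hg : g₂ PT = powerRatio (χ * ζ / log 2) (ζ * Pf) (1 + ζ * PT) := by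
    rw [hg₂, powerRatio]
    ring
  have hf : f₂ = logUtility ζ Pf χ (1 - β) := funext hf₂
  have hmono : StrictMonoOn f₂ (Ioc 0 PT) :=
    hf ▸ strictMonoOn_logUtility hζ hPf.le hχ hmild (hg ▸ hgPT)
  exact ⟨hmono, fun P hP hne => hmono hP ⟨hP.1.trans_le hP.2, le_rfl⟩ (hP.2.lt_of_ne hne)⟩

/-- Case 1 of the optimal transmit power characterization (equation (32)):
if `χζ ≤ ln 2`, `β ∈ [0,1]`, and `g₂(P_T) > 1 − β`, then `f₂` is strictly
increasing on `(0, P_T]`, so its maximum over `(0, P_T]` is attained uniquely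
at `P = P_T`. -/
theorem optimal_power_case1
    (ζ Pf χ β PT : ℝ) (hζ : 0 < ζ) (hPf : 0 < Pf) (hχ : 0 ≤ χ)
    (hmild : χ * ζ ≤ Real.log 2) (hβ0 : 0 ≤ β) (hβ1 : β ≤ 1) (hPT : 0 < PT)
    (g₂ f₂ : ℝ → ℝ)
    (hg₂ : ∀ P : ℝ, g₂ P =
      ζ * (P + Pf + χ / Real.log 2 * Real.log (1 + ζ * P)) /
        ((1 + ζ * P + χ * ζ / Real.log 2) * Real.log (1 + ζ * P)))
    (hf₂ : ∀ P : ℝ, f₂ P =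
      Real.log (Real.logb 2 (1 + ζ * P)) -
        (1 - β) * Real.log (P + Pf + χ * Real.logb 2 (1 + ζ * P)))
    (hgPT : 1 - β < g₂ PT) :
    StrictMonoOn f₂ (Set.Ioc 0 PT) ∧
      ∀ P ∈ Set.Ioc (0 : ℝ) PT, P ≠ PT → f₂ P < f₂ PT :=
  optimal_power_case1_general ζ Pf χ β PT hζ hPf hχ hmild g₂ f₂ hg₂ hf₂ hgPT
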